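/- Let G be a finite graph with n vertices and m edges, and let S(G) be its subdivision graph. Then P_{A(S(G))}(x) = x^{m−n} · P_{Q(G)}(x²), where Q(G) is the signless Laplacian of G. -/

import Mathlib

open Polynomial

variable {V : Type*}

/-- The signless Laplacian `Q(G) = D(G) + A(G)` of a graph. -/
def signlessLaplacian (G : SimpleGraph V) [Fintype V] [DecidableEq V] [DecidableRel G.Adj] :
    Matrix V V ℝ :=
  Matrix.diagonal (fun v => (G.degree v : ℝ)) + G.adjMatrix ℝ

/-- The subdivision graph `S(G)` of a graph `G`: each edge `uv` is replaced by a path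
`u - w_{uv} - v` through a new vertex `w_{uv}`.  Its vertex set is `V ⊕ G.edgeSet`, an
original vertex being adjacent exactly to the new vertices of the edges containing it. -/
def subdivision (G : SimpleGraph V) : SimpleGraph (V ⊕ G.edgeSet) where
  Adj x y :=
    match x, y with
    | Sum.inl v, Sum.inr e => v ∈ (e : Sym2 V)
    | Sum.inr e, Sum.inl v => v ∈ (e : Sym2 V)
    | _, _ => False
  symm := by constructor; rintro (v | e) (w | f) h <;> simp_all
  loopless := by constructor; rintro (v | e) h <;> simp_all

instance subdivisionAdjDecidable (G : SimpleGraph V) [DecidableEq V] :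
    DecidableRel (subdivision G).Adj := by
  rintro (v | e) (w | f) <;> simp only [subdivision] <;> infer_instance

/-!
Let `B` be the vertex–edge incidence matrix of `G`. Then `A(S(G))` is the bipartite block
matrix `[[0, B], [Bᵀ, 0]]` and `B Bᵀ = Q(G)`. Right-multiplying the characteristic matrix
`[[xI, -B], [-Bᵀ, xI]]` by `[[xI, 0], [Bᵀ, I]]` gives the block-triangular matrix
`[[x²I - B Bᵀ, -B], [0, xI]]`, and comparing determinants gives
`P_{A(S(G))}(x) · xⁿ = P_{Q(G)}(x²) · xᵐ`.
-/

open Matrix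

namespace Matrix

variable {R : Type*} [CommRing R] {m n : Type*} [Fintype m] [Fintype n] [DecidableEq m]
  [DecidableEq n]

theorem charpoly_comp_eq_det (M : Matrix n n R) (p : R[X]) :
    M.charpoly.comp p = (scalar n p - M.map C).det := by
  rw [charpoly, comp_eq_aeval, AlgHom.map_det]
  congr 1
  ext i j
  by_cases h : i = j <;> simp [h]

theorem det_scalar (r : R) : (scalar n r).det = r ^ Fintype.card n := by
  simp [det_diagonal]

theorem charpoly_fromBlocks_zero₁₁_zero₂₂ (A : Matrix m n R) (B : Matrix n m R) :
    (fromBlocks 0 A B 0).charpoly * X ^ Fintype.card m =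
      (A * B).charpoly.comp (X ^ 2) * X ^ Fintype.card n := by
  have hmul : charmatrix (fromBlocks 0 A B 0) * fromBlocks (scalar m X) 0 (B.map C) 1 =
      fromBlocks (scalar m (X ^ 2) - (A * B).map C) (-A.map C) 0 (scalar n X) := by
    simp only [charmatrix_fromBlocks, charmatrix_zero, fromBlocks_multiply, Matrix.map_mul]
    rw [← map_mul, ← sq, Matrix.neg_mul, ← sub_eq_add_neg,
      ← scalar_comm X (Commute.all X) (-B.map C)]
    simp
  have hdet := congrArg det hmul
  rwa [det_mul, det_fromBlocks_zero₁₂, det_fromBlocks_zero₂₁, det_one, mul_one, det_scalar,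
    det_scalar, ← charpoly_comp_eq_det, ← charpoly] at hdet

end Matrix

namespace SimpleGraph

variable (R : Type*) (G : SimpleGraph V) [DecidableEq V] [DecidableRel G.Adj]

def edgeIncMatrix [Zero R] [One R] : Matrix V G.edgeSet R :=
  (G.incMatrix R).submatrix id (↑)

theorem edgeIncMatrix_apply [Zero R] [One R] (v : V) (e : G.edgeSet) :
    G.edgeIncMatrix R v e = if v ∈ (e : Sym2 V) then 1 else 0 := by
  simp [edgeIncMatrix, incMatrix_apply', incidenceSet, e.2]

theorem adjMatrix_subdivision [Zero R] [One R] :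
    (subdivision G).adjMatrix R =
      fromBlocks 0 (G.edgeIncMatrix R) (G.edgeIncMatrix R)ᵀ 0 := by
  ext (v | e) (w | f) <;> simp only [adjMatrix_apply] <;> simp [edgeIncMatrix_apply, subdivision]

theorem edgeIncMatrix_mul_transpose [Fintype V] [NonAssocSemiring R] :
    G.edgeIncMatrix R * (G.edgeIncMatrix R)ᵀ = G.incMatrix R * (G.incMatrix R)ᵀ := by
  ext v w
  simp only [mul_apply, transpose_apply, edgeIncMatrix, submatrix_apply, id]
  rw [← Finset.sum_subtype G.edgeFinset (fun _ => mem_edgeFinset)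
    (fun e => G.incMatrix R v e * G.incMatrix R w e)]
  refine Finset.sum_subset (Finset.subset_univ _) fun e _ he => ?_
  rw [incMatrix_of_notMem_incidenceSet, zero_mul]
  exact fun h => he (mem_edgeFinset.2 h.1)

theorem edgeIncMatrix_mul_transpose_eq_signlessLaplacian [Fintype V] :
    G.edgeIncMatrix ℝ * (G.edgeIncMatrix ℝ)ᵀ = signlessLaplacian G := by
  rw [edgeIncMatrix_mul_transpose, incMatrix_mul_transpose]
  ext v w
  by_cases h : v = w <;> simp [h, signlessLaplacian, adjMatrix_apply]

end SimpleGraph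

/-- For a graph `G` with `n` vertices and `m` edges,
`P_{A(S(G))}(x) = x^{m-n} · P_{Q(G)}(x²)`  (stated multiplied through by `x^n`,
so that it also makes sense when `m < n`). -/
theorem subdivision_charpoly (G : SimpleGraph V) [Fintype V] [DecidableEq V]
    [DecidableRel G.Adj] (n m : ℕ) (hn : n = Fintype.card V) (hm : m = G.edgeFinset.card) :
    ((subdivision G).adjMatrix ℝ).charpoly * X ^ n =
      ((signlessLaplacian G).charpoly.comp (X ^ 2)) * X ^ m := by
  rw [hn, hm, G.edgeFinset_card, G.adjMatrix_subdivision ℝ, charpoly_fromBlocks_zero₁₁_zero₂₂,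
    G.edgeIncMatrix_mul_transpose_eq_signlessLaplacian]
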